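/- arXiv:2006.07799 — 2 statements merged into one kernel-verified Lean document; each statement's English description precedes it below -/
import Mathlib

section
/- Let l, r ≥ 0 be integers with r + 1 ≤ l ≤ r + 2, let q ≥ 1 be an integer, and let λ₀, λ_∞ be as in the context. For R > 0 define λ_R(s) = λ₀(s) + R·λ_∞(s). Then for every R > 0 and every θ with 0 < θ < 2π, Re λ_R(e^{iθ}) < 0; moreover λ_R(1) = 0. (Hence the circulant coefficient matrix of the semi-discretized advection-diffusion equation, whose eigenvalues are λ_R(e^{2πik/N}) for k = 1, …, N, is semistable.) -/
/-- Optimal finite-difference coefficients for the first derivative on the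
stencil `{-l, …, r}`. -/
noncomputable def aCoef (l r : ℕ) (k : ℤ) : ℝ :=
  if k = 0 then
    -∑ ν ∈ (Finset.Icc (-(l : ℤ)) (r : ℤ)).erase 0, (1 : ℝ) / (ν : ℝ)
  else
    -((-1 : ℝ) ^ k / (k : ℝ)) *
      ((Nat.factorial l * Nat.factorial r : ℕ) : ℝ) /
      ((Nat.factorial ((l : ℤ) + k).toNat * Nat.factorial ((r : ℤ) - k).toNat : ℕ) : ℝ)

/-- The symbol `λ₀(s) = -Σ_{k=-l}^{r} a_k s^k` of the advection discretization. -/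
noncomputable def lam0 (l r : ℕ) (s : ℂ) : ℂ :=
  -∑ k ∈ Finset.Icc (-(l : ℤ)) (r : ℤ), (aCoef l r k : ℂ) * s ^ k

/-- Optimal centered finite-difference coefficients for the second derivative on
the stencil `{-q, …, q}`. -/
noncomputable def bCoef (q : ℕ) (k : ℤ) : ℝ :=
  if k = 0 then
    -∑ j ∈ Finset.Icc 1 q, 2 / (j : ℝ) ^ 2
  else
    -(2 * (-1 : ℝ) ^ k / (k : ℝ) ^ 2) *
      ((Nat.factorial q * Nat.factorial q : ℕ) : ℝ) /
      ((Nat.factorial ((q : ℤ) + k).toNat * Nat.factorial ((q : ℤ) - k).toNat : ℕ) : ℝ)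

/-- The symbol `λ_∞(s) = Σ_{k=-q}^{q} b_k s^k` of the diffusion discretization. -/
noncomputable def lamInf (q : ℕ) (s : ℂ) : ℂ :=
  ∑ k ∈ Finset.Icc (-(q : ℤ)) (q : ℤ), (bCoef q k : ℂ) * s ^ k

/-!
On the unit circle `s̄ = s⁻¹`, so `(1 - s) (1 - s⁻¹) = |1 - s|²`. Expanding the powers of
`(1 - s) (1 - s⁻¹) = 2 - s - s⁻¹` in Laurent monomials and comparing coefficients gives
`λ_∞(s) = -∑_{j=1}^{q} c_j ((1 - s) (1 - s⁻¹)) ^ j` with `c_j = 2 (j!)² / (j² (2j)!) > 0`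
(a telescoping sum), and, when `l - r ∈ {1, 2}`,
`λ₀(s) + λ₀(s⁻¹) = -β ((1 - s) (1 - s⁻¹)) ^ l` with `β = l! r! / (l (l + r)!) > 0`.
Hence `Re λ₀(s) = -β |1 - s|^(2l) / 2 ≤ 0` and `λ_∞(s) = -∑ c_j |1 - s|^(2j) < 0` for `s ≠ 1`,
while both symbols vanish at `s = 1`.

The condition on `l - r` enters through the falling factorial
`D(m) = m (m - 1) ⋯ (m - (l - r) + 1)`: for `n ≥ 1` the coefficient identity reduces to
`l (D(l + n) - D(l - n)) = n D(2l)`, which says that the odd part of `D(l + x)` is linear in `x`.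
-/

open Finset Nat

theorem Finset.sum_Icc_comp_neg {M : Type*} [AddCommMonoid M] (f : ℤ → M) (a b : ℤ) :
    ∑ k ∈ Icc a b, f (-k) = ∑ k ∈ Icc (-b) (-a), f k :=
  sum_nbij' (fun k ↦ -k) (fun k ↦ -k) (fun k hk ↦ by rw [mem_Icc] at hk ⊢; omega)
    (fun k hk ↦ by rw [mem_Icc] at hk ⊢; omega) (fun k _ ↦ neg_neg k) (fun k _ ↦ neg_neg k)
    (fun _ _ ↦ rfl)

theorem neg_one_zpow_neg {α : Type*} [DivisionRing α] (k : ℤ) : (-1 : α) ^ (-k) = (-1) ^ k := by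
  rw [zpow_neg, ← inv_zpow, inv_neg, inv_one]

noncomputable def diffPowCoef (j : ℕ) (k : ℤ) : ℝ :=
  (-1) ^ k * ((2 * j).choose (j + k).toNat : ℝ)

theorem diffPowCoef_neg (j : ℕ) {k : ℤ} (hk : k ∈ Icc (-(j : ℤ)) j) :
    diffPowCoef j (-k) = diffPowCoef j k := by
  rw [mem_Icc] at hk
  have hsymm : (j + -k).toNat = 2 * j - (j + k).toNat := by omega
  rw [diffPowCoef, diffPowCoef, neg_one_zpow_neg, hsymm, Nat.choose_symm (by omega)]

theorem diffPowCoef_natCast {j n : ℕ} (h : n ≤ j) :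
    diffPowCoef j n = (-1) ^ n * ((2 * j)! / ((j + n)! * (j - n)!)) := by
  rw [diffPowCoef, zpow_natCast, show ((j : ℤ) + n).toNat = j + n by omega,
    Nat.cast_choose ℝ (by omega), show 2 * j - (j + n) = j - n by omega]

theorem one_sub_mul_one_sub_inv_pow {s : ℂ} (hs : s ≠ 0) (j : ℕ) :
    ((1 - s) * (1 - s⁻¹)) ^ j = ∑ k ∈ Icc (-(j : ℤ)) j, (diffPowCoef j k : ℂ) * s ^ k := by
  have hfactor : ((1 - s) * (1 - s⁻¹)) ^ j = (-1) ^ j * s ^ (-(j : ℤ)) * (s - 1) ^ (2 * j) := by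
    rw [zpow_neg, zpow_natCast, pow_mul, ← inv_pow, ← mul_pow, ← mul_pow]
    congr 1
    field_simp
    ring
  rw [hfactor, sub_pow, mul_sum]
  refine sum_nbij' (fun m ↦ (m : ℤ) - j) (fun k ↦ (j + k).toNat) ?_ ?_ ?_ ?_ ?_
  · intro m hm
    rw [mem_range] at hm
    rw [mem_Icc]
    omega
  · intro k hk
    rw [mem_Icc] at hk
    rw [mem_range]
    omega
  · intro m _
    omega
  · intro k hk
    rw [mem_Icc] at hk
    omega
  · intro m hm
    rw [mem_range] at hm
    rw [diffPowCoef, show ((j : ℤ) + (m - j)).toNat = m by omega, zpow_sub₀ hs,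
      zpow_sub₀ (by norm_num), zpow_neg, zpow_natCast, zpow_natCast, zpow_natCast]
    push_cast
    rw [pow_add, pow_mul, neg_one_sq, one_pow, mul_one, zpow_natCast]
    field_simp
    rw [← pow_mul, pow_mul', neg_one_sq]
    simp

noncomputable def diffusionWeight (j : ℕ) : ℝ := 2 * (j ! : ℝ) ^ 2 / ((j : ℝ) ^ 2 * (2 * j)!)

theorem sum_Icc_factorial_sq_div {n : ℕ} (hn : 1 ≤ n) {m : ℕ} (hnm : n ≤ m) :
    ∑ j ∈ Icc n m, (j ! : ℝ) ^ 2 / ((j : ℝ) ^ 2 * (j + n)! * (j - n)!) =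
      (m ! : ℝ) ^ 2 / ((n : ℝ) ^ 2 * (m + n)! * (m - n)!) := by
  induction m, hnm using Nat.le_induction with
  | base => rw [Icc_self, sum_singleton]
  | succ m hnm ih =>
    rw [sum_Icc_succ_top (by omega), ih, show m + 1 - n = m - n + 1 by omega,
      show m + 1 + n = m + n + 1 by omega]
    have hn' : (n : ℝ) ≠ 0 := by positivity
    have hmn : (m : ℝ) - n + 1 ≠ 0 := ne_of_gt (by linarith [(Nat.cast_le (α := ℝ)).2 hnm])
    push_cast [Nat.factorial_succ, Nat.cast_sub hnm]
    field_simp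
    ring

theorem bCoef_neg (q : ℕ) (k : ℤ) : bCoef q (-k) = bCoef q k := by
  rcases eq_or_ne k 0 with rfl | hk
  · rw [neg_zero]
  · rw [bCoef, bCoef, if_neg (neg_ne_zero.2 hk), if_neg hk, neg_one_zpow_neg, sub_neg_eq_add,
      ← sub_eq_add_neg]
    push_cast
    ring

theorem bCoef_natCast_eq_neg_sum {q n : ℕ} (hn : n ≤ q) :
    bCoef q n = -∑ j ∈ Icc 1 q,
      if (n : ℤ) ∈ Icc (-(j : ℤ)) j then diffusionWeight j * diffPowCoef j n else 0 := by
  rcases Nat.eq_zero_or_pos n with rfl | hn1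
  · rw [bCoef, if_pos Nat.cast_zero]
    push_cast
    refine congrArg Neg.neg (sum_congr rfl fun j hj ↦ ?_)
    rw [mem_Icc] at hj
    have hj' : (j : ℝ) ≠ 0 := Nat.cast_ne_zero.2 (by omega)
    rw [if_pos (by simp), ← Nat.cast_zero, diffPowCoef_natCast (Nat.zero_le j), diffusionWeight]
    simp only [pow_zero, add_zero, Nat.sub_zero, one_mul]
    field_simp
  · have hfilter : (Icc 1 q).filter (fun j : ℕ ↦ (n : ℤ) ∈ Icc (-(j : ℤ)) j) = Icc n q := by
      ext j; simp only [mem_filter, mem_Icc]; omega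
    rw [← sum_filter, hfilter]
    have hterm : ∀ j ∈ Icc n q, diffusionWeight j * diffPowCoef j n =
        (-1) ^ n * 2 * ((j ! : ℝ) ^ 2 / ((j : ℝ) ^ 2 * (j + n)! * (j - n)!)) := by
      intro j hj
      rw [mem_Icc] at hj
      have hj' : (j : ℝ) ≠ 0 := Nat.cast_ne_zero.2 (by omega)
      rw [diffPowCoef_natCast hj.1, diffusionWeight]
      field_simp
    rw [sum_congr rfl hterm, ← mul_sum, sum_Icc_factorial_sq_div hn1 hn, bCoef,
      if_neg (by omega), zpow_natCast, show ((q : ℤ) + n).toNat = q + n by omega,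
      show ((q : ℤ) - n).toNat = q - n by omega]
    push_cast
    ring

theorem bCoef_eq_neg_sum {q : ℕ} {k : ℤ} (hk : k ∈ Icc (-(q : ℤ)) q) :
    bCoef q k = -∑ j ∈ Icc 1 q,
      if k ∈ Icc (-(j : ℤ)) j then diffusionWeight j * diffPowCoef j k else 0 := by
  obtain ⟨n, rfl | rfl⟩ := k.eq_nat_or_neg
  · exact bCoef_natCast_eq_neg_sum (by rw [mem_Icc] at hk; omega)
  · rw [bCoef_neg, bCoef_natCast_eq_neg_sum (by rw [mem_Icc] at hk; omega)]
    refine congrArg Neg.neg (sum_congr rfl fun j _ ↦ ?_)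
    by_cases hnj : (n : ℤ) ∈ Icc (-(j : ℤ)) j
    · rw [if_pos hnj, if_pos (by rw [mem_Icc] at hnj ⊢; omega), diffPowCoef_neg j hnj]
    · rw [if_neg hnj, if_neg (by rw [mem_Icc] at hnj ⊢; omega)]

theorem lamInf_eq_neg_sum {s : ℂ} (hs : s ≠ 0) (q : ℕ) :
    lamInf q s = -∑ j ∈ Icc 1 q, (diffusionWeight j : ℂ) * ((1 - s) * (1 - s⁻¹)) ^ j := by
  have hextend : ∀ j ∈ Icc 1 q, (diffusionWeight j : ℂ) * ((1 - s) * (1 - s⁻¹)) ^ j =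
      ∑ k ∈ Icc (-(q : ℤ)) q, if k ∈ Icc (-(j : ℤ)) j then
        (diffusionWeight j : ℂ) * (diffPowCoef j k * s ^ k) else 0 := by
    intro j hj
    rw [mem_Icc] at hj
    rw [sum_ite_mem, inter_eq_right.2 (Icc_subset_Icc (by omega) (by omega)),
      one_sub_mul_one_sub_inv_pow hs, mul_sum]
  rw [sum_congr rfl hextend, sum_comm, lamInf, ← sum_neg_distrib]
  refine sum_congr rfl fun k hk ↦ ?_
  rw [bCoef_eq_neg_sum hk]
  push_cast
  rw [neg_mul, sum_mul, ← sum_neg_distrib, ← sum_neg_distrib]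
  refine sum_congr rfl fun j _ ↦ ?_
  split_ifs <;> push_cast <;> ring

theorem diffusionWeight_pos {j : ℕ} (hj : 1 ≤ j) : 0 < diffusionWeight j := by
  have hj' : (0 : ℝ) < j := by exact_mod_cast hj
  unfold diffusionWeight
  positivity

theorem lamInf_one (q : ℕ) : lamInf q 1 = 0 := by
  rw [lamInf_eq_neg_sum one_ne_zero, neg_eq_zero]
  refine sum_eq_zero fun j hj ↦ ?_
  rw [inv_one, sub_self, zero_mul, zero_pow (by rw [mem_Icc] at hj; omega), mul_zero]

noncomputable def aCoefExt (l r : ℕ) (k : ℤ) : ℝ := if k ≤ r then aCoef l r k else 0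

noncomputable def advectionWeight (l r : ℕ) : ℝ := (l ! * r ! : ℝ) / (l * (l + r)!)

theorem lam0_eq_neg_sum_aCoefExt {l r : ℕ} (hrl : r ≤ l) (s : ℂ) :
    lam0 l r s = -∑ k ∈ Icc (-(l : ℤ)) l, (aCoefExt l r k : ℂ) * s ^ k := by
  rw [lam0, ← inter_eq_right.2 (Icc_subset_Icc le_rfl (Nat.cast_le.2 hrl)), ← sum_ite_mem]
  refine congrArg Neg.neg (sum_congr rfl fun k hk ↦ ?_)
  rw [mem_Icc] at hk
  by_cases hkr : k ≤ r
  · rw [if_pos (mem_Icc.2 ⟨hk.1, hkr⟩), aCoefExt, if_pos hkr]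
  · rw [if_neg (by simp [hkr]), aCoefExt, if_neg hkr, Complex.ofReal_zero, zero_mul]

theorem aCoefExt_natCast {l r n : ℕ} (hrl : r ≤ l) (hn : 1 ≤ n) (hnl : n ≤ l) :
    aCoefExt l r n = -((-1) ^ n / n) * ((l ! * r ! : ℝ) / ((l + n)! * (l - n)!)) *
      (l - n).descFactorial (l - r) := by
  rw [aCoefExt]
  by_cases hnr : n ≤ r
  · have hsplit := Nat.factorial_mul_descFactorial (show l - r ≤ l - n by omega)
    rw [show l - n - (l - r) = r - n by omega] at hsplit
    have hD : ((l - n).descFactorial (l - r) : ℝ) ≠ 0 :=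
      Nat.cast_ne_zero.2 (Nat.descFactorial_pos.2 (by omega)).ne'
    rw [if_pos (by exact_mod_cast hnr), aCoef, if_neg (by omega), zpow_natCast,
      show ((l : ℤ) + n).toNat = l + n by omega, show ((r : ℤ) - n).toNat = r - n by omega,
      ← hsplit]
    push_cast
    field_simp
  · rw [if_neg (by exact_mod_cast hnr), Nat.descFactorial_eq_zero_iff_lt.2 (by omega)]
    simp

theorem aCoef_neg_natCast {l r n : ℕ} (hrl : r ≤ l) (hn : 1 ≤ n) (hnl : n ≤ l) :
    aCoef l r (-n) = (-1) ^ n / n * ((l ! * r ! : ℝ) / ((l + n)! * (l - n)!)) *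
      (l + n).descFactorial (l - r) := by
  have hsplit := Nat.factorial_mul_descFactorial (show l - r ≤ l + n by omega)
  rw [show l + n - (l - r) = r + n by omega] at hsplit
  have hD : ((l + n).descFactorial (l - r) : ℝ) ≠ 0 :=
    Nat.cast_ne_zero.2 (Nat.descFactorial_pos.2 (by omega)).ne'
  rw [aCoef, if_neg (by omega), neg_one_zpow_neg, zpow_natCast,
    show ((l : ℤ) + -n).toNat = l - n by omega, show ((r : ℤ) - -n).toNat = r + n by omega,
    ← hsplit]
  push_cast
  field_simp

theorem advectionWeight_mul_diffPowCoef {l r n : ℕ} (hrl : r ≤ l) (hnl : n ≤ l) :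
    advectionWeight l r * diffPowCoef l n =
      (-1) ^ n * ((l ! * r ! : ℝ) / ((l + n)! * (l - n)!)) * (2 * l).descFactorial (l - r) / l := by
  have hsplit := Nat.factorial_mul_descFactorial (show l - r ≤ 2 * l by omega)
  rw [show 2 * l - (l - r) = l + r by omega] at hsplit
  rw [advectionWeight, diffPowCoef_natCast hnl, ← hsplit]
  push_cast
  field_simp

theorem mul_descFactorial_sub_descFactorial {d : ℕ} (hd : d = 1 ∨ d = 2) {l n : ℕ}
    (hnl : n ≤ l) :
    (l : ℝ) * ((l + n).descFactorial d - (l - n).descFactorial d) =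
      n * (2 * l).descFactorial d := by
  rcases hd with rfl | rfl
  · push_cast [Nat.descFactorial_one, Nat.cast_sub hnl]
    ring
  · push_cast [Nat.cast_descFactorial_two, Nat.cast_sub hnl]
    ring

theorem aCoef_zero {l r : ℕ} (hrl : r ≤ l) :
    aCoef l r 0 = ∑ ν ∈ Ioc (r : ℤ) l, (1 : ℝ) / ν := by
  have hsymm : ∑ ν ∈ Icc (-(l : ℤ)) l, (1 : ℝ) / ν = 0 := by
    have hneg := sum_Icc_comp_neg (fun ν : ℤ ↦ (1 : ℝ) / ν) (-(l : ℤ)) l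
    simp only [neg_neg, Int.cast_neg, div_neg, sum_neg_distrib] at hneg
    linarith
  have hsplit := sum_filter_add_sum_filter_not (Icc (-(l : ℤ)) l) (· ≤ (r : ℤ))
    (fun ν : ℤ ↦ (1 : ℝ) / ν)
  have hle : (Icc (-(l : ℤ)) l).filter (· ≤ (r : ℤ)) = Icc (-(l : ℤ)) r := by
    ext ν; simp only [mem_filter, mem_Icc]; omega
  have hgt : (Icc (-(l : ℤ)) l).filter (¬ · ≤ (r : ℤ)) = Ioc (r : ℤ) l := by
    ext ν; simp only [mem_filter, mem_Icc, mem_Ioc]; omega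
  rw [hle, hgt, hsymm] at hsplit
  -- the erased term `ν = 0` is `1 / 0 = 0`
  rw [aCoef, if_pos rfl, sum_erase _ (by simp)]
  linarith

theorem two_mul_aCoef_zero {l r : ℕ} (hlr : l = r + 1 ∨ l = r + 2) :
    2 * aCoef l r 0 = advectionWeight l r * diffPowCoef l 0 := by
  have hweight := advectionWeight_mul_diffPowCoef (n := 0) (by omega : r ≤ l) (Nat.zero_le l)
  rw [Nat.cast_zero] at hweight
  rw [hweight, aCoef_zero (by omega)]
  rcases hlr with rfl | rfl
  · have hIoc : Ioc (r : ℤ) (r + 1 : ℕ) = {(r : ℤ) + 1} := by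
      ext ν; simp only [mem_Ioc, mem_singleton]; omega
    rw [hIoc, sum_singleton, show r + 1 - r = 1 by omega]
    push_cast [Nat.descFactorial_one, Nat.factorial_succ]
    field_simp
  · have hIoc : Ioc (r : ℤ) (r + 2 : ℕ) = {(r : ℤ) + 1, (r : ℤ) + 2} := by
      ext ν; simp only [mem_Ioc, mem_insert, mem_singleton]; omega
    rw [hIoc, sum_pair (by omega), show r + 2 - r = 2 by omega]
    push_cast [Nat.cast_descFactorial_two, Nat.factorial_succ]
    field_simp
    ring

theorem aCoefExt_natCast_add_aCoefExt_neg {l r n : ℕ} (hlr : l = r + 1 ∨ l = r + 2)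
    (hnl : n ≤ l) :
    aCoefExt l r n + aCoefExt l r (-n) = advectionWeight l r * diffPowCoef l n := by
  have hrl : r ≤ l := by omega
  rcases Nat.eq_zero_or_pos n with rfl | hn
  · rw [Nat.cast_zero, neg_zero, ← two_mul, aCoefExt, if_pos (by positivity),
      two_mul_aCoef_zero hlr]
  · have hodd := mul_descFactorial_sub_descFactorial (d := l - r) (by omega) hnl
    have hn' : (n : ℝ) ≠ 0 := Nat.cast_ne_zero.2 (by omega)
    have hl' : (l : ℝ) ≠ 0 := Nat.cast_ne_zero.2 (by omega)
    rw [aCoefExt_natCast hrl hn hnl, aCoefExt, if_pos (by omega), aCoef_neg_natCast hrl hn hnl,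
      advectionWeight_mul_diffPowCoef hrl hnl]
    field_simp
    linear_combination hodd

theorem aCoefExt_add_aCoefExt_neg {l r : ℕ} (hlr : l = r + 1 ∨ l = r + 2) {k : ℤ}
    (hk : k ∈ Icc (-(l : ℤ)) l) :
    aCoefExt l r k + aCoefExt l r (-k) = advectionWeight l r * diffPowCoef l k := by
  obtain ⟨n, rfl | rfl⟩ := k.eq_nat_or_neg
  · exact aCoefExt_natCast_add_aCoefExt_neg hlr (by rw [mem_Icc] at hk; omega)
  · rw [neg_neg, add_comm, aCoefExt_natCast_add_aCoefExt_neg hlr (by rw [mem_Icc] at hk; omega),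
      diffPowCoef_neg l (by rw [mem_Icc] at hk ⊢; omega)]

theorem lam0_add_lam0_inv {l r : ℕ} (hlr : l = r + 1 ∨ l = r + 2) {s : ℂ} (hs : s ≠ 0) :
    lam0 l r s + lam0 l r s⁻¹ = -(advectionWeight l r : ℂ) * ((1 - s) * (1 - s⁻¹)) ^ l := by
  have hrl : r ≤ l := by omega
  have hreflect : ∑ k ∈ Icc (-(l : ℤ)) l, (aCoefExt l r k : ℂ) * s⁻¹ ^ k =
      ∑ k ∈ Icc (-(l : ℤ)) l, (aCoefExt l r (-k) : ℂ) * s ^ k := by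
    rw [← neg_neg (l : ℤ), ← sum_Icc_comp_neg, neg_neg]
    simp only [inv_zpow', zpow_neg, inv_inv]
  rw [lam0_eq_neg_sum_aCoefExt hrl, lam0_eq_neg_sum_aCoefExt hrl, hreflect, ← neg_add,
    ← sum_add_distrib, one_sub_mul_one_sub_inv_pow hs, mul_sum, ← sum_neg_distrib]
  refine sum_congr rfl fun k hk ↦ ?_
  rw [← add_mul, ← Complex.ofReal_add, aCoefExt_add_aCoefExt_neg hlr hk]
  push_cast
  ring

theorem lam0_one {l r : ℕ} (hlr : l = r + 1 ∨ l = r + 2) : lam0 l r 1 = 0 := by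
  have hsum := lam0_add_lam0_inv hlr one_ne_zero
  rw [inv_one, sub_self, zero_mul, zero_pow (by omega), mul_zero, ← two_mul] at hsum
  exact (mul_eq_zero.1 hsum).resolve_left two_ne_zero

theorem lam0_conj (l r : ℕ) (s : ℂ) :
    lam0 l r (starRingEnd ℂ s) = starRingEnd ℂ (lam0 l r s) := by
  simp only [lam0, map_neg, map_sum, map_mul, map_zpow₀, Complex.conj_ofReal]

theorem one_sub_mul_one_sub_inv_of_norm_eq_one {s : ℂ} (hs : ‖s‖ = 1) :
    (1 - s) * (1 - s⁻¹) = Complex.normSq (1 - s) := by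
  rw [Complex.inv_eq_conj hs, ← Complex.mul_conj, map_sub, map_one]

theorem re_lam0_of_norm_eq_one {l r : ℕ} (hlr : l = r + 1 ∨ l = r + 2) {s : ℂ} (hs : ‖s‖ = 1) :
    (lam0 l r s).re = -(advectionWeight l r * Complex.normSq (1 - s) ^ l) / 2 := by
  have hsum := lam0_add_lam0_inv hlr (norm_ne_zero_iff.1 (hs.trans_ne one_ne_zero))
  rw [one_sub_mul_one_sub_inv_of_norm_eq_one hs, Complex.inv_eq_conj hs, lam0_conj,
    Complex.add_conj] at hsum
  have hre := congrArg Complex.re hsum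
  simp only [Complex.ofReal_re, ← Complex.ofReal_pow, ← Complex.ofReal_neg,
    ← Complex.ofReal_mul] at hre
  linarith

theorem lamInf_of_norm_eq_one (q : ℕ) {s : ℂ} (hs : ‖s‖ = 1) :
    lamInf q s = ((-∑ j ∈ Icc 1 q, diffusionWeight j * Complex.normSq (1 - s) ^ j : ℝ) : ℂ) := by
  rw [lamInf_eq_neg_sum (norm_ne_zero_iff.1 (hs.trans_ne one_ne_zero)),
    one_sub_mul_one_sub_inv_of_norm_eq_one hs]
  push_cast
  rfl

theorem Complex.exp_ofReal_mul_I_ne_one {θ : ℝ} (hθ0 : 0 < θ) (hθ2π : θ < 2 * Real.pi) :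
    Complex.exp (θ * Complex.I) ≠ 1 := by
  intro h
  obtain ⟨n, hn⟩ := Complex.exp_eq_one_iff.1 h
  have hθ : θ = n * (2 * Real.pi) := by
    apply Complex.ofReal_injective
    apply mul_right_cancel₀ Complex.I_ne_zero
    push_cast
    rw [hn]
    ring
  have hπ := Real.pi_pos
  have h0 : (0 : ℝ) < n := by nlinarith
  have h1 : (n : ℝ) < 1 := by nlinarith
  have : (0 : ℤ) < n ∧ n < 1 := ⟨by exact_mod_cast h0, by exact_mod_cast h1⟩
  omega

/-- Stability of the semi-discretized advection-diffusion equation: for any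
`R > 0`, the eigenvalue symbol `λ_R(s) = λ₀(s) + R·λ_∞(s)` has negative real
part on the unit circle away from `s = 1`, and vanishes at `s = 1`. -/
theorem semidiscrete_ADE_semistable (l r : ℕ) (h1 : r + 1 ≤ l) (h2 : l ≤ r + 2)
    (q : ℕ) (hq : 1 ≤ q) :
    ∀ R : ℝ, 0 < R →
      (∀ θ : ℝ, 0 < θ → θ < 2 * Real.pi →
        (lam0 l r (Complex.exp (θ * Complex.I)) +
          (R : ℂ) * lamInf q (Complex.exp (θ * Complex.I))).re < 0) ∧
      lam0 l r 1 + (R : ℂ) * lamInf q 1 = 0 := by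
  have hlr : l = r + 1 ∨ l = r + 2 := by omega
  intro R hR
  refine ⟨fun θ hθ0 hθ2π ↦ ?_, by rw [lam0_one hlr, lamInf_one, mul_zero, add_zero]⟩
  have hs := Complex.norm_exp_ofReal_mul_I θ
  set t := Complex.normSq (1 - Complex.exp (θ * Complex.I))
  have ht : 0 < t :=
    Complex.normSq_pos.2 (sub_ne_zero.2 (Complex.exp_ofReal_mul_I_ne_one hθ0 hθ2π).symm)
  have hadv : 0 ≤ advectionWeight l r * t ^ l := by unfold advectionWeight; positivity
  have hdiff : 0 < ∑ j ∈ Icc 1 q, diffusionWeight j * t ^ j :=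
    sum_pos (fun j hj ↦ mul_pos (diffusionWeight_pos (mem_Icc.1 hj).1) (pow_pos ht j))
      ⟨1, mem_Icc.2 ⟨le_rfl, hq⟩⟩
  rw [Complex.add_re, Complex.re_ofReal_mul, re_lam0_of_norm_eq_one hlr hs,
    lamInf_of_norm_eq_one q hs, Complex.ofReal_re]
  nlinarith
end

section
/- Let l, r ≥ 0 be integers with r + 1 ≤ l ≤ r + 2 and l ≥ 2, and let λ₀ be as in the context. Then for every μ_c > 0 there exists θ₀ > 0 such that for all θ with 0 < |θ| < θ₀, |1 + μ_c·λ₀(e^{iθ})| > 1. (Hence the forward Euler method combined with this spatial discretization of the advection equation, run at fixed Courant number μ_c = δt/h, is unstable in the limit h → 0.) -/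
/-! The coefficients `a_k` are the weights of the finite-difference formula on the nodes
`-l, …, r` that differentiates every polynomial of degree `≤ l + r` exactly at `0`. Writing
`P = P(0) + X·Q`, the identity `a_k·k = -w_k + δ_{k0}`, with `w_k = (-1)^k l! r!/((l+k)! (r-k)!)`
proportional to the coefficients of the `(l+r)`-th forward difference, reduces exactness to
`Σ a_k = 0`; and that follows by testing on the Lagrange basis polynomial of the node `0`, whose
derivative at `0` is `a_0`. For `l + r ≥ 2` the moments `Σ a_k k^m = δ_{m1}`, `m ≤ 2`, give
`λ₀(e^{iθ}) = -iθ + O(θ³)`, hence `|1 + μ λ₀(e^{iθ})|² ≥ 1 + μ²θ²/4 - O(|θ|³) > 1` for small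
`θ ≠ 0`.
-/

open Finset Polynomial Nat Asymptotics Filter Topology Complex

theorem sum_Icc_neg_eq_sum_range {M : Type*} [AddCommMonoid M] (l r : ℕ) (f : ℤ → M) :
    ∑ k ∈ Icc (-(l : ℤ)) r, f k = ∑ j ∈ range (l + r + 1), f (j - l) := by
  refine sum_nbij' (fun k ↦ (k + l).toNat) (fun j ↦ (j : ℤ) - l) ?_ ?_ ?_ ?_ ?_ <;>
    intro x hx <;> simp only [mem_Icc, mem_range] at hx ⊢ <;>
    first | omega | (congr 1; omega)

theorem sum_neg_one_pow_mul_choose_mul_eval_eq_zero {n : ℕ} (P : ℝ[X]) (hP : P.natDegree < n)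
    (y : ℝ) :
    ∑ j ∈ range (n + 1), (-1 : ℝ) ^ (n - j) * n.choose j * P.eval (y + j) = 0 := by
  have := congrFun (Polynomial.fwdDiff_iter_eq_zero_of_degree_lt hP) y
  rw [fwdDiff_iter_eq_sum_shift] at this
  simpa [zsmul_eq_mul] using this

section Stencil

variable (l r : ℕ)

noncomputable def stencilWeight (k : ℤ) : ℝ :=
  (-1 : ℝ) ^ k * ((Nat.factorial l * Nat.factorial r : ℕ) : ℝ) /
    ((Nat.factorial ((l : ℤ) + k).toNat * Nat.factorial ((r : ℤ) - k).toNat : ℕ) : ℝ)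

theorem stencilWeight_zero : stencilWeight l r 0 = 1 := by
  simp [stencilWeight, Nat.factorial_ne_zero]

theorem stencilWeight_natCast_sub {j : ℕ} (hj : j ≤ l + r) :
    stencilWeight l r (j - l) =
      (-1) ^ r * (l ! * r ! / (l + r)! : ℝ) * ((-1) ^ (l + r - j) * (l + r).choose j) := by
  have hsign : (j : ℤ) - l = r - ((l + r - j : ℕ) : ℤ) := by omega
  have hl : ((l : ℤ) + (j - l)).toNat = j := by omega
  have hr : ((r : ℤ) - (j - l)).toNat = l + r - j := by omega
  rw [stencilWeight, hl, hr, hsign, zpow_sub₀ (by norm_num), zpow_natCast, zpow_natCast,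
    Nat.cast_choose ℝ hj]
  field_simp
  rw [← pow_mul, (even_two.mul_left _).neg_one_pow]
  push_cast
  ring

theorem sum_stencilWeight_mul_eval_eq_zero (P : ℝ[X]) (hP : P.natDegree < l + r) :
    ∑ k ∈ Icc (-(l : ℤ)) r, stencilWeight l r k * P.eval (k : ℝ) = 0 := by
  rw [sum_Icc_neg_eq_sum_range]
  calc ∑ j ∈ range (l + r + 1), stencilWeight l r (j - l) * P.eval (((j : ℤ) - l : ℤ) : ℝ)
      = (-1) ^ r * (l ! * r ! / (l + r)! : ℝ) * ∑ j ∈ range (l + r + 1),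
          (-1 : ℝ) ^ (l + r - j) * (l + r).choose j * P.eval (-(l : ℝ) + j) := by
        rw [mul_sum]
        refine sum_congr rfl fun j hj ↦ ?_
        rw [stencilWeight_natCast_sub l r (by simpa [Nat.lt_succ_iff] using hj)]
        push_cast
        ring_nf
    _ = 0 := by rw [sum_neg_one_pow_mul_choose_mul_eval_eq_zero P hP, mul_zero]

theorem aCoef_mul_intCast (k : ℤ) :
    aCoef l r k * k = -stencilWeight l r k + if k = 0 then 1 else 0 := by
  rcases eq_or_ne k 0 with rfl | hk
  · simp [stencilWeight_zero]
  · rw [aCoef, if_neg hk, if_neg hk, stencilWeight, add_zero]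
    field_simp

theorem sum_aCoef_mul_eval_eq_eval_zero_mul_sum_add (hlr : 0 < l + r) (P : ℝ[X])
    (hP : P.natDegree ≤ l + r) :
    ∑ k ∈ Icc (-(l : ℤ)) r, aCoef l r k * P.eval (k : ℝ) =
      P.eval 0 * ∑ k ∈ Icc (-(l : ℤ)) r, aCoef l r k + P.derivative.eval 0 := by
  have hQ : P.divX.natDegree < l + r := by
    rw [natDegree_divX_eq_natDegree_tsub_one]; omega
  have hsplit (x : ℝ) : P.eval x = x * P.divX.eval x + P.eval 0 := by
    conv_lhs => rw [← divX_mul_X_add P]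
    simp [coeff_zero_eq_eval_zero, mul_comm]
  have hderiv : P.derivative.eval 0 = P.divX.eval 0 := by
    simp [← coeff_zero_eq_eval_zero, coeff_derivative, coeff_divX]
  have hmem : (0 : ℤ) ∈ Icc (-(l : ℤ)) r := by simp
  calc ∑ k ∈ Icc (-(l : ℤ)) r, aCoef l r k * P.eval (k : ℝ)
      = ∑ k ∈ Icc (-(l : ℤ)) r, (aCoef l r k * k) * P.divX.eval (k : ℝ)
          + P.eval 0 * ∑ k ∈ Icc (-(l : ℤ)) r, aCoef l r k := by
        rw [mul_sum, ← sum_add_distrib]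
        exact sum_congr rfl fun k _ ↦ by rw [hsplit]; ring
    _ = P.eval 0 * ∑ k ∈ Icc (-(l : ℤ)) r, aCoef l r k + P.derivative.eval 0 := by
        simp only [aCoef_mul_intCast, add_mul, neg_mul, sum_add_distrib, sum_neg_distrib,
          sum_stencilWeight_mul_eval_eq_zero l r _ hQ, ite_mul, one_mul, zero_mul, sum_ite_eq',
          if_pos hmem, hderiv]
        push_cast
        ring

theorem derivative_lagrangeBasis_zero_eval_zero :
    (Lagrange.basis (Icc (-(l : ℤ)) r) (fun k : ℤ ↦ (k : ℝ)) 0).derivative.eval 0 =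
      aCoef l r 0 := by
  rw [Lagrange.basis, derivative_prod_finset, eval_finsetSum, aCoef, if_pos rfl, ← sum_neg_distrib]
  refine sum_congr rfl fun m hm ↦ ?_
  have hprod : (∏ b ∈ ((Icc (-(l : ℤ)) r).erase 0).erase m,
      Lagrange.basisDivisor ((0 : ℤ) : ℝ) (b : ℝ)).eval 0 = 1 := by
    rw [eval_prod]
    refine prod_eq_one fun b hb ↦ ?_
    have hb0 : (b : ℝ) ≠ 0 := by exact_mod_cast (mem_erase.1 (mem_erase.1 hb).2).1
    exact_mod_cast Lagrange.eval_basisDivisor_left_of_ne hb0.symm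
  rw [eval_mul, hprod, one_mul]
  simp [Lagrange.basisDivisor]

theorem sum_aCoef (hlr : 0 < l + r) : ∑ k ∈ Icc (-(l : ℤ)) r, aCoef l r k = 0 := by
  set L := Lagrange.basis (Icc (-(l : ℤ)) r) (fun k : ℤ ↦ (k : ℝ)) 0
  have hinj : Set.InjOn (fun k : ℤ ↦ (k : ℝ)) (Icc (-(l : ℤ)) r) :=
    Int.cast_injective.injOn
  have hmem : (0 : ℤ) ∈ Icc (-(l : ℤ)) r := by simp
  have hnode : ∀ k ∈ Icc (-(l : ℤ)) r, L.eval (k : ℝ) = if k = 0 then 1 else 0 := by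
    intro k hk
    split_ifs with h
    · subst h; exact Lagrange.eval_basis_self hinj hmem
    · exact Lagrange.eval_basis_of_ne (Ne.symm h) hk
  have hdeg : L.natDegree ≤ l + r := by
    rw [Lagrange.natDegree_basis hinj hmem, Int.card_Icc]; omega
  have h := sum_aCoef_mul_eval_eq_eval_zero_mul_sum_add l r hlr L hdeg
  rw [sum_congr rfl fun k hk ↦ by rw [hnode k hk], derivative_lagrangeBasis_zero_eval_zero] at h
  have hL0 : L.eval 0 = 1 := by simpa using hnode 0 hmem
  simpa [sum_ite_eq', hmem, hL0] using h

theorem sum_aCoef_mul_eval (hlr : 0 < l + r) (P : ℝ[X]) (hP : P.natDegree ≤ l + r) :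
    ∑ k ∈ Icc (-(l : ℤ)) r, aCoef l r k * P.eval (k : ℝ) = P.derivative.eval 0 := by
  rw [sum_aCoef_mul_eval_eq_eval_zero_mul_sum_add l r hlr P hP, sum_aCoef l r hlr, mul_zero,
    zero_add]

theorem sum_aCoef_mul_pow (hlr : 0 < l + r) {m : ℕ} (hm : m ≤ l + r) :
    ∑ k ∈ Icc (-(l : ℤ)) r, aCoef l r k * (k : ℝ) ^ m = if m = 1 then 1 else 0 := by
  have h := sum_aCoef_mul_eval l r hlr (X ^ m) (by simpa using hm)
  simp only [eval_pow, eval_X, derivative_X_pow, eval_mul, eval_C] at h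
  rw [h]
  rcases m with _ | _ | m <;> simp

theorem lam0_exp_add_self_eq (hlr : 2 ≤ l + r) (z : ℂ) :
    lam0 l r (exp z) + z = -∑ k ∈ Icc (-(l : ℤ)) r,
      (aCoef l r k : ℂ) * (exp (k * z) - ∑ i ∈ range 3, (k * z) ^ i / (i ! : ℂ)) := by
  have hmoment {m : ℕ} (hm : m ≤ 2) : ∑ k ∈ Icc (-(l : ℤ)) r, (aCoef l r k : ℂ) * (k : ℂ) ^ m =
      ((if m = 1 then 1 else 0 : ℝ) : ℂ) := by
    exact_mod_cast sum_aCoef_mul_pow l r (by omega) (by omega : m ≤ l + r)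
  have m0 := hmoment (m := 0) (by norm_num)
  have m1 := hmoment (m := 1) (by norm_num)
  have m2 := hmoment (m := 2) le_rfl
  norm_num at m0 m1 m2
  have hterm (k : ℤ) : (aCoef l r k : ℂ) * (exp (k * z) - ∑ i ∈ range 3, (k * z) ^ i / (i ! : ℂ)) =
      aCoef l r k * exp (k * z) - aCoef l r k - z * (aCoef l r k * k)
        - z ^ 2 / 2 * (aCoef l r k * k ^ 2) := by
    rw [sum_range_succ, sum_range_succ, sum_range_one]
    norm_num [factorial]
    ring
  rw [sum_congr rfl fun k _ ↦ hterm k, sum_sub_distrib, sum_sub_distrib, sum_sub_distrib,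
    ← mul_sum, ← mul_sum, m0, m1, m2, lam0]
  simp only [← exp_int_mul]
  ring

theorem lam0_exp_add_self_isBigO (hlr : 2 ≤ l + r) :
    (fun z ↦ lam0 l r (exp z) + z) =O[𝓝 0] (· ^ 3) := by
  simp_rw [lam0_exp_add_self_eq l r hlr]
  refine IsBigO.neg_left (IsBigO.fun_sum fun k _ ↦ IsBigO.const_mul_left ?_ _)
  have hk : Tendsto (fun z : ℂ ↦ (k : ℂ) * z) (𝓝 0) (𝓝 0) := by
    simpa using (continuous_const_mul (k : ℂ)).tendsto 0
  refine ((exp_sub_sum_range_isBigO_pow 3).comp_tendsto hk).trans ?_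
  simpa [Function.comp_def, mul_pow] using
    (isBigO_refl (· ^ 3) (𝓝 (0 : ℂ))).const_mul_left ((k : ℂ) ^ 3)

end Stencil

theorem one_lt_norm_one_add_mul_of_norm_add_le {w : ℂ} {θ μ C : ℝ} (hθ : θ ≠ 0) (hμ : 0 < μ)
    (hw : ‖w + θ * I‖ ≤ C * |θ| ^ 3) (hCθ : 2 * C * θ ^ 2 ≤ 1) (hCμ : 8 * C * |θ| < μ) :
    1 < ‖1 + μ * w‖ := by
  set E := w + θ * I
  have hre : (1 + μ * w).re = 1 + μ * E.re := by simp [E]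
  have him : (1 + μ * w).im = μ * (E.im - θ) := by simp [E]
  have hEC : ‖E‖ ≤ C * |θ| * θ ^ 2 := by rw [pow_succ, sq_abs] at hw; linarith
  have hEim : |E.im| ≤ |θ| / 2 := by
    nlinarith [abs_im_le_norm E, mul_le_mul_of_nonneg_left hCθ (abs_nonneg θ)]
  have hEre : 2 * μ * |E.re| < μ ^ 2 * θ ^ 2 / 4 := by
    nlinarith [abs_re_le_norm E, mul_lt_mul_of_pos_right hCμ (by positivity : 0 < μ * θ ^ 2)]
  have hImθ : θ ^ 2 / 4 ≤ (E.im - θ) ^ 2 := by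
    have : |θ| / 2 ≤ |E.im - θ| := by
      linarith [abs_sub_abs_le_abs_sub θ E.im, abs_sub_comm θ E.im]
    nlinarith [sq_abs θ, sq_abs (E.im - θ), abs_nonneg θ]
  have hsq : 1 < ‖1 + μ * w‖ ^ 2 := by
    rw [Complex.sq_norm, normSq_apply, hre, him]
    nlinarith [mul_le_mul_of_nonneg_left (neg_abs_le E.re) (by positivity : 0 ≤ 2 * μ),
      mul_le_mul_of_nonneg_left hImθ (sq_nonneg μ), sq_nonneg (μ * E.re)]
  exact one_lt_sq_iff_one_lt_abs _ |>.1 hsq |>.trans_eq (abs_norm _)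

theorem eventually_one_lt_norm_one_add_mul {w : ℝ → ℂ}
    (hw : (fun θ : ℝ ↦ w θ + θ * I) =O[𝓝 0] (· ^ 3)) {μ : ℝ} (hμ : 0 < μ) :
    ∀ᶠ θ in 𝓝 0, θ ≠ 0 → 1 < ‖1 + μ * w θ‖ := by
  obtain ⟨C, hC⟩ := hw.bound
  have h1 : ∀ᶠ θ in 𝓝 (0 : ℝ), 2 * C * θ ^ 2 < 1 :=
    Tendsto.eventually_lt_const zero_lt_one
      (by simpa using ((continuous_pow 2).const_mul (2 * C) |>.tendsto 0))
  have h2 : ∀ᶠ θ in 𝓝 (0 : ℝ), 8 * C * |θ| < μ :=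
    Tendsto.eventually_lt_const hμ
      (by simpa using (continuous_abs.const_mul (8 * C) |>.tendsto 0))
  filter_upwards [hC, h1, h2] with θ hCθ h1θ h2θ hθ
  exact one_lt_norm_one_add_mul_of_norm_add_le hθ hμ (by simpa using hCθ) h1θ.le h2θ

theorem forward_euler_high_order_unstable_general (l r : ℕ)
    (hl : 2 ≤ l) :
    ∀ μc : ℝ, 0 < μc → ∃ θ₀ > (0 : ℝ), ∀ θ : ℝ, 0 < |θ| → |θ| < θ₀ →
      1 < ‖(1 + (μc : ℂ) * lam0 l r (Complex.exp (θ * Complex.I)))‖ := by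
  intro μc hμ
  have hI : Tendsto (fun θ : ℝ ↦ (θ : ℂ) * I) (𝓝 0) (𝓝 0) := by
    simpa using (by fun_prop : Continuous fun θ : ℝ ↦ (θ : ℂ) * I).tendsto 0
  have hw : (fun θ : ℝ ↦ lam0 l r (exp (θ * I)) + θ * I) =O[𝓝 0] (· ^ 3) :=
    ((lam0_exp_add_self_isBigO l r (by omega)).comp_tendsto hI).trans
      (isBigO_of_le _ fun θ ↦ by simp [norm_pow])
  obtain ⟨ε, hε, h⟩ := Metric.eventually_nhds_iff.1 (eventually_one_lt_norm_one_add_mul hw hμ)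
  exact ⟨ε, hε, fun θ hθ hθε ↦ h (by simpa using hθε) (abs_pos.1 hθ)⟩

/-- Instability of forward Euler with a high-order upwind spatial
discretization (`l ≥ 2`) of the advection equation at fixed Courant number:
for every `μ_c > 0` there is `θ₀ > 0` such that `|1 + μ_c·λ₀(e^{iθ})| > 1`
for all `0 < |θ| < θ₀`. -/
theorem forward_euler_high_order_unstable (l r : ℕ)
    (h1 : r + 1 ≤ l) (h2 : l ≤ r + 2) (hl : 2 ≤ l) :
    ∀ μc : ℝ, 0 < μc → ∃ θ₀ > (0 : ℝ), ∀ θ : ℝ, 0 < |θ| → |θ| < θ₀ →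
      1 < ‖(1 + (μc : ℂ) * lam0 l r (Complex.exp (θ * Complex.I)))‖ :=
  forward_euler_high_order_unstable_general l r hl
end
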